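/- arXiv:0811.2590 — 2 statements merged into one kernel-verified Lean document; each statement's English description precedes it below -/
import Mathlib

section
/- Define ε on the 0-Hecke algebra H_n by ε(T_σ) = 1 if σ = w₀ and ε(T_σ) = 0 otherwise. Then the bilinear form (a,b) ↦ ε(ab) on H_n is nondegenerate, so (H_n, ε) is a Frobenius algebra. -/
/-- Coxeter length of a permutation of `Fin m`, as the number of inversions. -/
def invLength {m : ℕ} (σ : Equiv.Perm (Fin m)) : ℕ :=
  (Finset.univ.filter (fun p : Fin m × Fin m => p.1 < p.2 ∧ σ p.2 < σ p.1)).card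

/-- The `i`-th simple reflection `s_i = (i, i+1)` in the symmetric group on `n+1` letters. -/
def sgen (n : ℕ) (i : Fin n) : Equiv.Perm (Fin (n + 1)) :=
  Equiv.swap i.castSucc i.succ

/-- The longest element `w₀` of the symmetric group on `Fin m`, `j ↦ m - 1 - j`. -/
def longest (m : ℕ) : Equiv.Perm (Fin m) :=
  ⟨Fin.rev, Fin.rev, fun i => i.rev_rev, fun i => i.rev_rev⟩

/-!
In the 0-Hecke algebra every product `T_u T_v` is a basis vector `T_z` with `ℓ z ≤ ℓ u + ℓ v`,
where equality forces `z = u v`; conversely `T_u T_v = T_{uv}` when `ℓ (u v) = ℓ u + ℓ v`. Both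
follow by induction along a left descent of `u`. Hence `ε (T_u T_v) = δ_{uv, w₀}` as soon as
`ℓ u + ℓ v ≤ ℓ w₀`. Given `b ≠ 0`, pick `u₀` of maximal length in its support and put
`g = w₀ u₀⁻¹`, so that `ℓ g + ℓ u₀ = ℓ w₀`; then `ε (T_g b)` is the (nonzero) coefficient of
`T_{u₀}` in `b`. This separates on the right, and since `H_n` is finite-dimensional the form is
then nondegenerate.
-/

open Equiv Finset

section Length

variable {m n : ℕ}

def inversions (σ : Perm (Fin m)) : Finset (Fin m × Fin m) :=
  univ.filter fun p => p.1 < p.2 ∧ σ p.2 < σ p.1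

lemma invLength_eq_card_inversions (σ : Perm (Fin m)) : invLength σ = #(inversions σ) := rfl

@[simp]
lemma mem_inversions {σ : Perm (Fin m)} {p : Fin m × Fin m} :
    p ∈ inversions σ ↔ p.1 < p.2 ∧ σ p.2 < σ p.1 := by
  simp [inversions]

@[simp]
lemma sgen_mul_sgen_mul (i : Fin n) (w : Perm (Fin (n + 1))) :
    sgen n i * (sgen n i * w) = w := by
  simp [sgen, ← mul_assoc]

lemma sgen_lt_sgen_iff (i : Fin n) {x y : Fin (n + 1)}
    (hxy : ¬(x = i.castSucc ∧ y = i.succ)) (hyx : ¬(y = i.castSucc ∧ x = i.succ)) :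
    sgen n i x < sgen n i y ↔ x < y := by
  simp only [sgen, swap_apply_def, Fin.ext_iff, Fin.lt_def, Fin.val_castSucc, Fin.val_succ] at *
  split_ifs <;> simp only [Fin.val_castSucc, Fin.val_succ] <;> omega

lemma invLength_sgen_mul_of_lt (i : Fin n) {w : Perm (Fin (n + 1))}
    (h : w⁻¹ i.castSucc < w⁻¹ i.succ) :
    invLength (sgen n i * w) = invLength w + 1 := by
  set c := w⁻¹ i.castSucc
  set d := w⁻¹ i.succ
  have hc : ∀ x, w x = i.castSucc ↔ x = c := fun x => (Perm.eq_inv_iff_eq).symm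
  have hd : ∀ x, w x = i.succ ↔ x = d := fun x => (Perm.eq_inv_iff_eq).symm
  have hcd : (c, d) ∉ inversions w := by
    simp [c, d, Fin.castSucc_lt_succ.le]
  -- `s_i` only swaps the values `i, i + 1`, held by the positions `c < d`: it creates the
  -- inversion `(c, d)` and leaves the status of every other pair unchanged.
  suffices inversions (sgen n i * w) = insert (c, d) (inversions w) by
    rw [invLength_eq_card_inversions, this, card_insert_of_notMem hcd,
      invLength_eq_card_inversions]
  ext ⟨x, y⟩
  by_cases hxy : x = c ∧ y = d
  · obtain ⟨rfl, rfl⟩ := hxy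
    simp only [mem_inversions, Perm.mul_apply, mem_insert, true_or, iff_true]
    exact ⟨h, by simp [c, d, sgen]⟩
  by_cases hyx : y = c ∧ x = d
  · obtain ⟨rfl, rfl⟩ := hyx
    simp [hxy, not_lt.2 h.le]
  simp only [mem_inversions, Perm.mul_apply, mem_insert, Prod.mk.injEq, hxy, false_or]
  rw [sgen_lt_sgen_iff i (by simpa [hc, hd] using hyx) (by simpa [hc, hd] using hxy)]

lemma invLength_eq_sgen_mul_add_one_of_lt (i : Fin n) {w : Perm (Fin (n + 1))}
    (h : w⁻¹ i.succ < w⁻¹ i.castSucc) :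
    invLength w = invLength (sgen n i * w) + 1 := by
  simpa using invLength_sgen_mul_of_lt i (w := sgen n i * w) (by simpa [sgen] using h)

lemma invLength_sgen_mul_eq_or (i : Fin n) (w : Perm (Fin (n + 1))) :
    invLength (sgen n i * w) = invLength w + 1 ∨ invLength w = invLength (sgen n i * w) + 1 := by
  have hne : w⁻¹ i.castSucc ≠ w⁻¹ i.succ := by simp [Fin.ext_iff]
  exact hne.lt_or_gt.imp (invLength_sgen_mul_of_lt i) (invLength_eq_sgen_mul_add_one_of_lt i)

lemma exists_invLength_eq_sgen_mul_add_one {w : Perm (Fin (n + 1))} (hw : w ≠ 1) :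
    ∃ i, invLength w = invLength (sgen n i * w) + 1 := by
  by_contra! hasc
  have hmono : StrictMono ⇑w⁻¹ := Fin.strictMono_iff_lt_succ.2 fun i =>
    (not_lt.1 (mt (invLength_eq_sgen_mul_add_one_of_lt i) (hasc i))).lt_of_ne
      (by simp [Fin.ext_iff])
  exact hw (inv_eq_one.1 (Perm.ext fun x => congrFun hmono.eq_id x))

lemma invLength_mul_le (x y : Perm (Fin m)) : invLength (x * y) ≤ invLength x + invLength y := by
  simp only [invLength_eq_card_inversions]
  have hsdiff : #(inversions (x * y) \ inversions y) ≤ #(inversions x) := by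
    refine card_le_card_of_injOn (fun p => (y p.1, y p.2)) (fun p hp => ?_) fun p _ q _ hpq => ?_
    · simp only [coe_sdiff, Set.mem_sdiff, mem_coe, mem_inversions, Perm.mul_apply, not_and,
        not_lt] at hp ⊢
      exact ⟨(hp.2 hp.1.1).lt_of_ne (y.injective.ne hp.1.1.ne), hp.1.2⟩
    · simpa [Prod.ext_iff] using hpq
  calc #(inversions (x * y)) ≤ #(inversions (x * y) \ inversions y) + #(inversions y) :=
        card_le_card_sdiff_add_card
    _ ≤ #(inversions x) + #(inversions y) := by gcongr

lemma invLength_inv (σ : Perm (Fin m)) : invLength σ⁻¹ = invLength σ := by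
  simp only [invLength_eq_card_inversions]
  refine card_nbij' (fun p => (σ⁻¹ p.2, σ⁻¹ p.1)) (fun p => (σ p.2, σ p.1)) ?_ ?_ ?_ ?_ <;>
    intro p <;> simp +contextual

lemma invLength_longest_mul (x : Perm (Fin m)) :
    invLength (longest m * x) + invLength x = invLength (longest m) := by
  have hcompl : inversions (longest m * x) =
      (inversions (longest m)).filter fun p => ¬x p.2 < x p.1 := by
    ext p
    simp only [mem_inversions, mem_filter, Perm.mul_apply, longest, coe_fn_mk, Fin.rev_lt_rev,
      not_lt, and_self]
    exact and_congr_right fun hp => ⟨le_of_lt, fun h => h.lt_of_ne (x.injective.ne hp.ne)⟩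
  have hx : inversions x = (inversions (longest m)).filter fun p => x p.2 < x p.1 := by
    ext p
    simp [longest]
  rw [invLength_eq_card_inversions, invLength_eq_card_inversions, invLength_eq_card_inversions,
    hcompl, hx, add_comm]
  exact card_filter_add_card_filter_not _

lemma Equiv.Perm.induction_on_sgen_mul {P : Perm (Fin (n + 1)) → Prop} (one : P 1)
    (sgen_mul : ∀ i u, invLength (sgen n i * u) = invLength u + 1 → P u → P (sgen n i * u))
    (w : Perm (Fin (n + 1))) : P w := by
  induction h : invLength w using Nat.strong_induction_on generalizing w with
  | _ N ih =>
    rcases eq_or_ne w 1 with rfl | hw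
    · exact one
    obtain ⟨i, hi⟩ := exists_invLength_eq_sgen_mul_add_one hw
    simpa using sgen_mul i (sgen n i * w) (by simpa using hi) (ih _ (by omega) _ rfl)

end Length

structure IsZeroHecke {M : Type*} [Monoid M] {n : ℕ} (T : Perm (Fin (n + 1)) → M) : Prop where
  one : T 1 = 1
  mul_of_lt : ∀ i w, invLength w < invLength (sgen n i * w) → T (sgen n i) * T w = T (sgen n i * w)
  mul_of_gt : ∀ i w, invLength (sgen n i * w) < invLength w → T (sgen n i) * T w = T w

namespace IsZeroHecke

variable {M : Type*} [Monoid M] {n : ℕ} {T : Perm (Fin (n + 1)) → M}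

lemma mul_of_invLength_mul_eq_add (hT : IsZeroHecke T) {u v : Perm (Fin (n + 1))}
    (h : invLength (u * v) = invLength u + invLength v) : T u * T v = T (u * v) := by
  induction u using Perm.induction_on_sgen_mul generalizing v with
  | one => rw [hT.one, one_mul, one_mul]
  | sgen_mul i u hsu ih =>
    have hsuv := invLength_sgen_mul_eq_or i (u * v)
    have huv := invLength_mul_le u v
    rw [mul_assoc] at h ⊢
    rw [← hT.mul_of_lt i u (by omega), mul_assoc, ih (by omega), hT.mul_of_lt i _ (by omega)]

lemma exists_mul_eq (hT : IsZeroHecke T) (u v : Perm (Fin (n + 1))) :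
    ∃ z, T u * T v = T z ∧ invLength z ≤ invLength u + invLength v ∧
      (invLength z = invLength u + invLength v → z = u * v) := by
  induction u using Perm.induction_on_sgen_mul with
  | one => exact ⟨v, by rw [hT.one, one_mul], le_add_self, fun _ => (one_mul v).symm⟩
  | sgen_mul i u hsu ih =>
    obtain ⟨z, hz, hle, heq⟩ := ih
    rw [← hT.mul_of_lt i u (by omega), mul_assoc, hz]
    rcases invLength_sgen_mul_eq_or i z with hsz | hsz
    · refine ⟨sgen n i * z, hT.mul_of_lt i z (by omega), by omega, fun h => ?_⟩
      rw [heq (by omega), mul_assoc]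
    · exact ⟨z, hT.mul_of_gt i z (by omega), by omega, by omega⟩

end IsZeroHecke

section FrobeniusForm

variable {k A : Type*} {n : ℕ}

lemma Module.Basis.coord_mul_of_invLength_add_le [CommSemiring k] [Semiring A] [Algebra k A]
    {B : Module.Basis (Perm (Fin (n + 1))) k A} (hB : IsZeroHecke B) {u v w : Perm (Fin (n + 1))}
    (h : invLength u + invLength v ≤ invLength w) :
    B.coord w (B u * B v) = if u * v = w then 1 else 0 := by
  split_ifs with huv
  · rw [hB.mul_of_invLength_mul_eq_add (le_antisymm (invLength_mul_le u v) (huv ▸ h)), huv]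
    simp
  · obtain ⟨z, hz, hle, heq⟩ := hB.exists_mul_eq u v
    rw [hz, B.coord_apply, B.repr_self, Finsupp.single_apply, if_neg]
    rintro rfl
    exact huv (heq (by omega)).symm

noncomputable def frobeniusForm [CommSemiring k] [Semiring A] [Algebra k A]
    (B : Module.Basis (Perm (Fin (n + 1))) k A) : LinearMap.BilinForm k A :=
  (LinearMap.mul k A).compr₂ (B.coord (longest (n + 1)))

lemma frobeniusForm_separatingRight [CommSemiring k] [Semiring A] [Algebra k A]
    {B : Module.Basis (Perm (Fin (n + 1))) k A} (hB : IsZeroHecke B) :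
    (frobeniusForm B).SeparatingRight := by
  intro b hb
  by_contra hb0
  obtain ⟨u₀, hu₀, hmax⟩ := (B.repr b).support.exists_max_image invLength
    (Finsupp.support_nonempty_iff.2 (by simpa using hb0))
  set w₀ := longest (n + 1)
  have hlen : invLength (w₀ * u₀⁻¹) + invLength u₀ = invLength w₀ := by
    simpa [invLength_inv] using invLength_longest_mul u₀⁻¹
  have hcoord : frobeniusForm B (B (w₀ * u₀⁻¹)) b = B.repr b u₀ := calc
    frobeniusForm B (B (w₀ * u₀⁻¹)) b
        = ∑ u ∈ (B.repr b).support, B.repr b u * B.coord w₀ (B (w₀ * u₀⁻¹) * B u) := by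
      conv_lhs => rw [← B.linearCombination_repr b]
      simp [frobeniusForm, Finsupp.linearCombination_apply, Finsupp.sum, w₀]
    _ = ∑ u ∈ (B.repr b).support, B.repr b u * if u = u₀ then 1 else 0 := by
      refine sum_congr rfl fun u hu => ?_
      rw [B.coord_mul_of_invLength_add_le hB (by have := hmax u hu; omega)]
      simp [mul_assoc, inv_mul_eq_one, eq_comm]
    _ = B.repr b u₀ := by simp [hu₀]
  exact Finsupp.mem_support_iff.1 hu₀ (hcoord ▸ hb _)

lemma frobeniusForm_nondegenerate [CommRing k] [IsDomain k] [Ring A] [Algebra k A]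
    {B : Module.Basis (Perm (Fin (n + 1))) k A} (hB : IsZeroHecke B) :
    (frobeniusForm B).Nondegenerate :=
  have := Module.Free.of_basis B
  have := Module.Finite.of_basis B
  .ofSeparatingRight (frobeniusForm_separatingRight hB)

end FrobeniusForm

/-- In the 0-Hecke algebra `H_{n+1}` (basis `T_w` with `T_e = 1`,
`T_s T_w = T_{sw}` when `ℓ(sw) > ℓ(w)` and `T_s T_w = T_w` when `ℓ(sw) < ℓ(w)`),
the bilinear form `(a,b) ↦ ε(ab)` with `ε(T_σ) = δ_{σ,w₀}` is nondegenerate,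
so `(H_n, ε)` is a Frobenius algebra. -/
theorem zeroHecke_trace_nondegenerate
    (k : Type*) [Field k] (A : Type*) [Ring A] [Algebra k A] (n : ℕ)
    (B : Module.Basis (Equiv.Perm (Fin (n + 1))) k A)
    (hone : B 1 = 1)
    (hup : ∀ (i : Fin n) (w : Equiv.Perm (Fin (n + 1))),
      invLength (sgen n i * w) > invLength w →
        B (sgen n i) * B w = B (sgen n i * w))
    (hdown : ∀ (i : Fin n) (w : Equiv.Perm (Fin (n + 1))),
      invLength (sgen n i * w) < invLength w →
        B (sgen n i) * B w = B w) :
    (∀ a : A, (∀ b : A, B.coord (longest (n + 1)) (a * b) = 0) → a = 0) ∧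
    (∀ b : A, (∀ a : A, B.coord (longest (n + 1)) (a * b) = 0) → b = 0) :=
  frobeniusForm_nondegenerate ⟨hone, hup, hdown⟩
end

section
/- In the Nilcoxeter algebra NC_n with m = ⌊(n−1)/2⌋ and twisting involution f(T_i) = T_{n−i}, for every permutation σ of {1,…,m}, the products T_1 T_2 ⋯ T_m and T_{σ(1)} T_{σ(2)} ⋯ T_{σ(m)} are equal in the quotient NC_n/[NC_n,NC_n]_t. -/
/-!
Modulo the twisted commutators, `a * b ≡ b * f a`. If moreover `f (f a) = a` and `f a` commutes
with `b`, then `a * b ≡ b * f a = f a * b ≡ b * a`. For a generator `T i` with `i < n / 2` the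
mirror generator `f (T i) = T (n - 1 - i)` is not adjacent to any other `T j` with `j < n / 2`, so
products of distinct such generators may be rotated cyclically.

Rotations and the commutation of non-adjacent generators then sort any ordering. Suppose the word
is `u ++ j :: v ++ w` with `u ++ j :: v` a permutation of `0, …, j` and `w = j + 1, …, n / 2 - 1`.
Rotating `u` to the back, moving `w` past `v` (all letters of `v` are below `j`) and rotating
`j :: w` to the back gives `v ++ u ++ j :: w`, which has the same shape with `j` in place of `j + 1`.
-/

open List

theorem List.prod_map_append_comm {ι M : Type*} [Monoid M] (t : ι → M) {u v : List ι}
    (h : ∀ x ∈ u, ∀ y ∈ v, Commute (t x) (t y)) :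
    ((u ++ v).map t).prod = ((v ++ u).map t).prod := by
  simp only [map_append, prod_append]
  refine (Commute.list_prod_left _ _ fun a ha => Commute.list_prod_right _ _ fun b hb => ?_).eq
  obtain ⟨x, hx, rfl⟩ := mem_map.1 ha
  obtain ⟨y, hy, rfl⟩ := mem_map.1 hb
  exact h x hx y hy

theorem List.range_append_range' {j m : ℕ} (h : j ≤ m) :
    range j ++ range' j (m - j) = range m := by
  have := range'_append_1 (s := 0) (m := j) (n := m - j)
  rwa [Nat.zero_add, Nat.add_sub_cancel' h, ← range_eq_range', ← range_eq_range'] at this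

theorem Equiv.Perm.map_finRange_val_perm_range {m : ℕ} (τ : Equiv.Perm (Fin m)) :
    (finRange m).map (fun j => (τ j : ℕ)) ~ range m := by
  simpa only [map_map, Function.comp_def, map_coe_finRange_eq_range] using
    τ.map_finRange_perm.map (fun j : Fin m => (j : ℕ))

section

variable {k A : Type*} [CommRing k] [Ring A] [Algebra k A]

def twistedCommutatorSpan (f : A →ₐ[k] A) : Submodule k A :=
  Submodule.span k {x : A | ∃ a b : A, x = a * b - b * f a}

namespace twistedCommutatorSpan

variable (f : A →ₐ[k] A)

local notation "π" => Submodule.mkQ (twistedCommutatorSpan f)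

theorem mkQ_mul (a b : A) : π (a * b) = π (b * f a) := by
  rw [Submodule.mkQ_apply, Submodule.mkQ_apply, Submodule.Quotient.eq]
  exact Submodule.subset_span ⟨a, b, rfl⟩

theorem mkQ_mul_comm_of_commute {a b : A} (ha : f (f a) = a) (hb : Commute (f a) b) :
    π (a * b) = π (b * a) := by
  rw [mkQ_mul, ← hb.eq, mkQ_mul, ha]

variable {f} (t : ℕ → A) {n : ℕ}

theorem mkQ_prod_cons_eq_append_singleton
    (hcomm : ∀ i j, i + 1 < j → j < n → Commute (t i) (t j))
    (hf : ∀ i < n, f (t i) = t (n - 1 - i)) {a : ℕ} {l : List ℕ}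
    (hl : a :: l <+~ range (n / 2)) :
    π ((a :: l).map t).prod = π ((l ++ [a]).map t).prod := by
  obtain ⟨l', hl', hsub⟩ := hl
  have hnd := hl'.nodup_iff.1 (hsub.nodup nodup_range)
  have hlt : ∀ x ∈ a :: l, x < n / 2 := fun x hx =>
    mem_range.1 (hsub.subset (hl'.symm.subset hx))
  have ha := hlt a mem_cons_self
  rw [map_cons, prod_cons, map_append, prod_append, map_singleton, prod_singleton]
  refine mkQ_mul_comm_of_commute f ?_ ?_
  · rw [hf a (by omega), hf _ (by omega)]
    congr 1
    omega
  · rw [hf a (by omega)]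
    refine Commute.list_prod_right _ _ fun y hy => ?_
    obtain ⟨x, hx, rfl⟩ := mem_map.1 hy
    have hxa : x ≠ a := fun h => (nodup_cons.1 hnd).1 (h ▸ hx)
    have hxlt := hlt x (mem_cons_of_mem a hx)
    exact (hcomm x _ (by omega) (by omega)).symm

theorem mkQ_prod_append_comm (hcomm : ∀ i j, i + 1 < j → j < n → Commute (t i) (t j))
    (hf : ∀ i < n, f (t i) = t (n - 1 - i)) {u v : List ℕ} (huv : u ++ v <+~ range (n / 2)) :
    π ((u ++ v).map t).prod = π ((v ++ u).map t).prod := by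
  induction u generalizing v with
  | nil => simp
  | cons a u ih =>
    have hrot := perm_append_singleton a (u ++ v)
    rw [cons_append, mkQ_prod_cons_eq_append_singleton t hcomm hf (l := u ++ v) huv, append_assoc,
      ih ((append_assoc u v [a] ▸ hrot).subperm.trans huv), append_assoc, singleton_append]

theorem mkQ_prod_perm_range_append (hcomm : ∀ i j, i + 1 < j → j < n → Commute (t i) (t j))
    (hf : ∀ i < n, f (t i) = t (n - 1 - i)) {j : ℕ} (hj : j ≤ n / 2) {x : List ℕ}
    (hx : x ~ range j) :
    π ((x ++ range' j (n / 2 - j)).map t).prod = π ((range (n / 2)).map t).prod := by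
  induction j generalizing x with
  | zero => rw [perm_nil.1 hx, nil_append, Nat.sub_zero, range_eq_range']
  | succ j ih =>
    obtain ⟨u, v, rfl⟩ := append_of_mem (hx.mem_iff.2 self_mem_range_succ)
    have huv : v ++ u ~ range j := perm_append_comm.trans <| (perm_cons j).1 <|
      perm_middle.symm.trans <| (range_succ ▸ hx).trans (perm_append_singleton j _)
    set w := range' (j + 1) (n / 2 - (j + 1))
    have hw : range' j (n / 2 - j) = j :: w := by
      rw [← range'_succ]
      congr 1
      omega
    have hword : u ++ j :: v ++ w ~ range (n / 2) := by
      rw [← range_append_range' hj]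
      exact hx.append_right w
    have hword' : v ++ u ++ j :: w ~ range (n / 2) := by
      rw [← hw, ← range_append_range' (Nat.le_of_succ_le hj)]
      exact huv.append_right _
    have hvw : ∀ a ∈ v, ∀ b ∈ w, Commute (t a) (t b) := fun a ha b hb => by
      have haj : a < j := mem_range.1 (huv.subset (mem_append_left u ha))
      have hbw : j + 1 ≤ b ∧ b < j + 1 + (n / 2 - (j + 1)) := mem_range'_1.1 hb
      exact hcomm a b (by omega) (by omega)
    calc π ((u ++ j :: v ++ w).map t).prod
        = π ((j :: (v ++ w) ++ u).map t).prod := by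
          rw [append_assoc, mkQ_prod_append_comm t hcomm hf (append_assoc .. ▸ hword.subperm)]
          simp
      _ = π ((j :: w ++ (v ++ u)).map t).prod := by
          have hvw := prod_map_append_comm t hvw
          simp only [map_append, prod_append] at hvw
          simp only [cons_append, map_cons, prod_cons, map_append, prod_append, hvw, mul_assoc]
      _ = π ((v ++ u ++ j :: w).map t).prod :=
          mkQ_prod_append_comm t hcomm hf (perm_append_comm.trans hword').subperm
      _ = π ((range (n / 2)).map t).prod := hw ▸ ih (by omega) huv

theorem mkQ_prod_perm_range (hcomm : ∀ i j, i + 1 < j → j < n → Commute (t i) (t j))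
    (hf : ∀ i < n, f (t i) = t (n - 1 - i)) {x : List ℕ} (hx : x ~ range (n / 2)) :
    π (x.map t).prod = π ((range (n / 2)).map t).prod := by
  simpa using mkQ_prod_perm_range_append t hcomm hf le_rfl hx

end twistedCommutatorSpan

end

theorem nilCoxeter_product_permutation_invariant_mod_twisted_general
    (k : Type*) [Field k] (A : Type*) [Ring A] [Algebra k A] (n : ℕ)
    (T : Fin n → A)
    (hcomm : ∀ i j : Fin n, (i : ℕ) + 1 < (j : ℕ) → T i * T j = T j * T i)
    (f : A →ₐ[k] A)
    (hf : ∀ i : Fin n, f (T i) = T i.rev) :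
    ∀ σ : Equiv.Perm (Fin (n / 2)),
      ((List.finRange (n / 2)).map
          (fun (j : Fin (n / 2)) => T (Fin.castLE (Nat.div_le_self n 2) j))).prod -
        ((List.finRange (n / 2)).map
          (fun (j : Fin (n / 2)) => T (Fin.castLE (Nat.div_le_self n 2) (σ j)))).prod ∈
        Submodule.span k {x : A | ∃ a b : A, x = a * b - b * f a} := by
  intro σ
  let t : ℕ → A := fun i => if h : i < n then T ⟨i, h⟩ else 1
  have ht : ∀ i (h : i < n), t i = T ⟨i, h⟩ := fun i h => dif_pos h
  have hcomm' : ∀ i j, i + 1 < j → j < n → Commute (t i) (t j) := fun i j hij hj => by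
    rw [ht i (by omega), ht j hj]
    exact hcomm _ _ hij
  have hf' : ∀ i < n, f (t i) = t (n - 1 - i) := fun i hi => by
    rw [ht i hi, ht _ (by omega), hf]
    exact congrArg T (Fin.ext (by simp; omega))
  have hword : ∀ τ : Equiv.Perm (Fin (n / 2)),
      (finRange (n / 2)).map (fun j => T (Fin.castLE (Nat.div_le_self n 2) (τ j))) =
        ((finRange (n / 2)).map (fun j => (τ j : ℕ))).map t := fun τ => by
    rw [map_map]
    exact map_congr_left fun j _ => (ht _ _).symm
  have hword_one := hword 1
  simp only [Equiv.Perm.coe_one, id_eq] at hword_one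
  rw [← Submodule.Quotient.eq, hword_one, hword σ]
  exact (twistedCommutatorSpan.mkQ_prod_perm_range t hcomm' hf'
      (Equiv.Perm.map_finRange_val_perm_range 1)).trans
    (twistedCommutatorSpan.mkQ_prod_perm_range t hcomm' hf' σ.map_finRange_val_perm_range).symm

/-- In the Nilcoxeter algebra `NC_{n+1}` (generators `T_1,…,T_n`,
here `T 0, …, T (n-1)` 0-indexed) with `m = ⌊n/2⌋ = ⌊((n+1)−1)/2⌋` and twisting
involution `f(T_i) = T_{n−i}` (`i ↦ i.rev` 0-indexed), for every permutation
`σ` of `{1,…,m}`, the products `T_1 T_2 ⋯ T_m` and `T_{σ(1)} T_{σ(2)} ⋯ T_{σ(m)}`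
are equal in the quotient `NC/[NC,NC]_t`. -/
theorem nilCoxeter_product_permutation_invariant_mod_twisted
    (k : Type*) [Field k] (A : Type*) [Ring A] [Algebra k A] (n : ℕ)
    (T : Fin n → A)
    (hsq : ∀ i : Fin n, T i * T i = 0)
    (hbraid : ∀ i j : Fin n, (i : ℕ) + 1 = (j : ℕ) →
      T i * T j * T i = T j * T i * T j)
    (hcomm : ∀ i j : Fin n, (i : ℕ) + 1 < (j : ℕ) → T i * T j = T j * T i)
    (f : A →ₐ[k] A)
    (hf : ∀ i : Fin n, f (T i) = T i.rev) :
    ∀ σ : Equiv.Perm (Fin (n / 2)),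
      ((List.finRange (n / 2)).map
          (fun (j : Fin (n / 2)) => T (Fin.castLE (Nat.div_le_self n 2) j))).prod -
        ((List.finRange (n / 2)).map
          (fun (j : Fin (n / 2)) => T (Fin.castLE (Nat.div_le_self n 2) (σ j)))).prod ∈
        Submodule.span k {x : A | ∃ a b : A, x = a * b - b * f a} :=
  nilCoxeter_product_permutation_invariant_mod_twisted_general k A n T hcomm f hf
end
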